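/- The majority protocol on states {σ, σ', Y, N} with output ω(σ) = ω(Y) = 1, ω(σ') = ω(N) = 0 and rules NY → YY, YN → YY, Nσ → Yσ, σN → σY, Yσ' → Nσ', σ'Y → σ'N, σσ' → NY, σ'σ → YN computes the predicate [x.σ ≥ x.σ']: for every input multiset x over {σ, σ'} of size ≥ 2 and every fair execution, eventually all agents have output 1 if the number of σ's in x is at least the number of σ''s, and output 0 otherwise. -/
import Mathlib


inductive MS : Type
  | sig : MS
  | sig' : MS
  | Y : MS
  | N : MS
deriving DecidableEq

/-- Rules: NY→YY, YN→YY, Nσ→Yσ, σN→σY, Yσ'→Nσ', σ'Y→σ'N, σσ'→NY, σ'σ→YN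
(all other pairs unchanged). -/
def δM : MS → MS → MS × MS
  | .N, .Y => (.Y, .Y)
  | .Y, .N => (.Y, .Y)
  | .N, .sig => (.Y, .sig)
  | .sig, .N => (.sig, .Y)
  | .Y, .sig' => (.N, .sig')
  | .sig', .Y => (.sig', .N)
  | .sig, .sig' => (.N, .Y)
  | .sig', .sig => (.Y, .N)
  | a, b => (a, b)

/-- Output: ω(σ) = ω(Y) = 1, ω(σ') = ω(N) = 0. -/
def ωM : MS → Bool
  | .sig => true
  | .Y => true
  | _ => false

def Step {Q : Type*} (δ : Q → Q → Q × Q) (c c' : Multiset Q) : Prop :=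
  ∃ q₁ q₂ rest, c = q₁ ::ₘ q₂ ::ₘ rest ∧ c' = (δ q₁ q₂).1 ::ₘ (δ q₁ q₂).2 ::ₘ rest

def IsFair {Q : Type*} (δ : Q → Q → Q × Q) (exec : ℕ → Multiset Q) : Prop :=
  ∀ c c' : Multiset Q, (∀ n, ∃ m, n ≤ m ∧ exec m = c) → Step δ c c' →
    ∀ n, ∃ m, n ≤ m ∧ exec m = c'

instance : Fintype MS := ⟨{MS.sig, MS.sig', MS.Y, MS.N}, fun x => by cases x <;> simp⟩

def wt : MS → ℤ
  | .sig => 1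
  | .sig' => -1
  | _ => 0

def D (c : Multiset MS) : ℤ := (c.map wt).sum

lemma wt_pair : ∀ a b : MS, wt (δM a b).1 + wt (δM a b).2 = wt a + wt b := by decide

lemma nonN_pair : ∀ a b : MS, (a ≠ .N ∨ b ≠ .N) → ((δM a b).1 ≠ .N ∨ (δM a b).2 ≠ .N) := by
  decide

lemma D_cons (a : MS) (c : Multiset MS) : D (a ::ₘ c) = wt a + D c := by simp [D]

lemma D_count (c : Multiset MS) :
    D c = (c.count MS.sig : ℤ) - c.count MS.sig' := by
  induction c using Multiset.induction with
  | empty => simp [D]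
  | cons a s ih =>
    rw [D_cons, ih]
    rcases a <;> simp [wt, Multiset.count_cons] <;> ring

lemma step_D {c c' : Multiset MS} (h : Step δM c c') : D c' = D c := by
  obtain ⟨a, b, rest, hc, hc'⟩ := h
  rw [hc, hc', D_cons, D_cons, D_cons, D_cons]
  have := wt_pair a b
  linarith

lemma step_card {c c' : Multiset MS} (h : Step δM c c') :
    Multiset.card c' = Multiset.card c := by
  obtain ⟨a, b, rest, hc, hc'⟩ := h
  rw [hc, hc']; simp

lemma step_nonN {c c' : Multiset MS} (h : Step δM c c')
    (hn : ∃ q ∈ c, q ≠ MS.N) : ∃ q ∈ c', q ≠ MS.N := by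
  obtain ⟨a, b, rest, hc, hc'⟩ := h
  obtain ⟨q, hq, hqN⟩ := hn
  rw [hc] at hq
  rcases Multiset.mem_cons.mp hq with h1 | hq
  · rcases nonN_pair a b (Or.inl (h1 ▸ hqN)) with h' | h'
    · exact ⟨_, by rw [hc']; exact Multiset.mem_cons_self _ _, h'⟩
    · exact ⟨_, by rw [hc']; exact Multiset.mem_cons_of_mem (Multiset.mem_cons_self _ _), h'⟩
  rcases Multiset.mem_cons.mp hq with h2 | hq
  · rcases nonN_pair a b (Or.inr (h2 ▸ hqN)) with h' | h'
    · exact ⟨_, by rw [hc']; exact Multiset.mem_cons_self _ _, h'⟩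
    · exact ⟨_, by rw [hc']; exact Multiset.mem_cons_of_mem (Multiset.mem_cons_self _ _), h'⟩
  · exact ⟨q, by rw [hc']; exact Multiset.mem_cons_of_mem (Multiset.mem_cons_of_mem hq), hqN⟩

abbrev Reach := Relation.ReflTransGen (Step δM)

lemma reach_D {c c' : Multiset MS} (h : Reach c c') : D c' = D c := by
  induction h with
  | refl => rfl
  | tail _ hs ih => rw [step_D hs, ih]

lemma reach_nonN {c c' : Multiset MS} (h : Reach c c')
    (hn : ∃ q ∈ c, q ≠ MS.N) : ∃ q ∈ c', q ≠ MS.N := by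
  induction h with
  | refl => exact hn
  | tail _ hs ih => exact step_nonN hs ih

/-- Apply the rule to a chosen pair of agents. -/
lemma step_pair {c : Multiset MS} {a b : MS} (ha : a ∈ c) (hb : b ∈ c.erase a) :
    Step δM c ((δM a b).1 ::ₘ (δM a b).2 ::ₘ (c.erase a).erase b) :=
  ⟨a, b, (c.erase a).erase b,
    by rw [Multiset.cons_erase hb, Multiset.cons_erase ha], rfl⟩

lemma count_erase2_ne {c : Multiset MS} (a b s : MS) (hsa : s ≠ a) (hsb : s ≠ b) :
    ((c.erase a).erase b).count s = c.count s := by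
  rw [Multiset.count_erase_of_ne hsb, Multiset.count_erase_of_ne hsa]

lemma count_erase2_snd {c : Multiset MS} (a s : MS) (hsa : s ≠ a) :
    ((c.erase a).erase s).count s = c.count s - 1 := by
  rw [Multiset.count_erase_self, Multiset.count_erase_of_ne hsa]

/-- Phase 1: drive `min(#σ, #σ')` to 0. -/
lemma phase1 : ∀ n (c : Multiset MS), c.count MS.sig' ≤ n →
    ∃ c', Reach c c' ∧ (c'.count MS.sig = 0 ∨ c'.count MS.sig' = 0) := by
  intro n
  induction n with
  | zero => exact fun c h => ⟨c, .refl, Or.inr (Nat.le_zero.mp h)⟩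
  | succ n ih =>
    intro c h
    by_cases h1 : c.count MS.sig = 0
    · exact ⟨c, .refl, Or.inl h1⟩
    by_cases h2 : c.count MS.sig' = 0
    · exact ⟨c, .refl, Or.inr h2⟩
    have ha : MS.sig ∈ c := Multiset.count_pos.mp (Nat.pos_of_ne_zero h1)
    have hb : MS.sig' ∈ c.erase MS.sig := by
      rw [Multiset.mem_erase_of_ne (by decide)]
      exact Multiset.count_pos.mp (Nat.pos_of_ne_zero h2)
    have hs := step_pair ha hb
    have hcnt : ((δM MS.sig MS.sig').1 ::ₘ (δM MS.sig MS.sig').2 ::ₘ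
        (c.erase MS.sig).erase MS.sig').count MS.sig' ≤ n := by
      show (MS.N ::ₘ MS.Y ::ₘ (c.erase MS.sig).erase MS.sig').count MS.sig' ≤ n
      rw [Multiset.count_cons_of_ne (by decide), Multiset.count_cons_of_ne (by decide),
        count_erase2_snd MS.sig MS.sig' (by decide)]
      omega
    obtain ⟨c', hr, hmin⟩ := ih _ hcnt
    exact ⟨c', .head hs hr, hmin⟩

/-- Phase 2 (d > 0): eliminate N's using a σ. -/
lemma phase2_sig : ∀ n (c : Multiset MS), c.count MS.N ≤ n →
    c.count MS.sig' = 0 → 0 < c.count MS.sig →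
    ∃ c', Reach c c' ∧ ∀ q ∈ c', q = MS.sig ∨ q = MS.Y := by
  intro n
  induction n with
  | zero =>
    intro c h hs' _
    refine ⟨c, .refl, fun q hq => ?_⟩
    rcases q with _ | _ | _ | _
    · exact Or.inl rfl
    · exact absurd hq (Multiset.count_eq_zero.mp hs')
    · exact Or.inr rfl
    · exact absurd hq (Multiset.count_eq_zero.mp (Nat.le_zero.mp h))
  | succ n ih =>
    intro c h hs' hsig
    by_cases hN : c.count MS.N = 0
    · refine ⟨c, .refl, fun q hq => ?_⟩
      rcases q with _ | _ | _ | _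
      · exact Or.inl rfl
      · exact absurd hq (Multiset.count_eq_zero.mp hs')
      · exact Or.inr rfl
      · exact absurd hq (Multiset.count_eq_zero.mp hN)
    have ha : MS.sig ∈ c := Multiset.count_pos.mp hsig
    have hb : MS.N ∈ c.erase MS.sig := by
      rw [Multiset.mem_erase_of_ne (by decide)]
      exact Multiset.count_pos.mp (Nat.pos_of_ne_zero hN)
    have hs := step_pair ha hb
    set rest := (c.erase MS.sig).erase MS.N with hrest
    have e1 : ((δM MS.sig MS.N).1 ::ₘ (δM MS.sig MS.N).2 ::ₘ rest) =
        MS.sig ::ₘ MS.Y ::ₘ rest := rfl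
    rw [e1] at hs
    have hN' : (MS.sig ::ₘ MS.Y ::ₘ rest).count MS.N ≤ n := by
      rw [Multiset.count_cons_of_ne (by decide), Multiset.count_cons_of_ne (by decide),
        hrest, count_erase2_snd MS.sig MS.N (by decide)]
      omega
    have hs'2 : (MS.sig ::ₘ MS.Y ::ₘ rest).count MS.sig' = 0 := by
      rw [Multiset.count_cons_of_ne (by decide), Multiset.count_cons_of_ne (by decide),
        hrest, count_erase2_ne MS.sig MS.N MS.sig' (by decide) (by decide)]
      exact hs'
    have hsig2 : 0 < (MS.sig ::ₘ MS.Y ::ₘ rest).count MS.sig := by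
      rw [Multiset.count_cons_self]; omega
    obtain ⟨c', hr, hg⟩ := ih _ hN' hs'2 hsig2
    exact ⟨c', .head hs hr, hg⟩

/-- Phase 2 (d = 0): eliminate N's using a Y. -/
lemma phase2_Y : ∀ n (c : Multiset MS), c.count MS.N ≤ n →
    c.count MS.sig = 0 → c.count MS.sig' = 0 → 0 < c.count MS.Y →
    ∃ c', Reach c c' ∧ ∀ q ∈ c', q = MS.Y := by
  intro n
  induction n with
  | zero =>
    intro c h hs hs' _
    refine ⟨c, .refl, fun q hq => ?_⟩
    rcases q with _ | _ | _ | _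
    · exact absurd hq (Multiset.count_eq_zero.mp hs)
    · exact absurd hq (Multiset.count_eq_zero.mp hs')
    · rfl
    · exact absurd hq (Multiset.count_eq_zero.mp (Nat.le_zero.mp h))
  | succ n ih =>
    intro c h hs hs' hY
    by_cases hN : c.count MS.N = 0
    · refine ⟨c, .refl, fun q hq => ?_⟩
      rcases q with _ | _ | _ | _
      · exact absurd hq (Multiset.count_eq_zero.mp hs)
      · exact absurd hq (Multiset.count_eq_zero.mp hs')
      · rfl
      · exact absurd hq (Multiset.count_eq_zero.mp hN)
    have ha : MS.Y ∈ c := Multiset.count_pos.mp hY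
    have hb : MS.N ∈ c.erase MS.Y := by
      rw [Multiset.mem_erase_of_ne (by decide)]
      exact Multiset.count_pos.mp (Nat.pos_of_ne_zero hN)
    have hstep := step_pair ha hb
    set rest := (c.erase MS.Y).erase MS.N with hrest
    have e1 : ((δM MS.Y MS.N).1 ::ₘ (δM MS.Y MS.N).2 ::ₘ rest) =
        MS.Y ::ₘ MS.Y ::ₘ rest := rfl
    rw [e1] at hstep
    have hN' : (MS.Y ::ₘ MS.Y ::ₘ rest).count MS.N ≤ n := by
      rw [Multiset.count_cons_of_ne (by decide), Multiset.count_cons_of_ne (by decide),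
        hrest, count_erase2_snd MS.Y MS.N (by decide)]
      omega
    have h1 : (MS.Y ::ₘ MS.Y ::ₘ rest).count MS.sig = 0 := by
      rw [Multiset.count_cons_of_ne (by decide), Multiset.count_cons_of_ne (by decide),
        hrest, count_erase2_ne MS.Y MS.N MS.sig (by decide) (by decide)]
      exact hs
    have h2 : (MS.Y ::ₘ MS.Y ::ₘ rest).count MS.sig' = 0 := by
      rw [Multiset.count_cons_of_ne (by decide), Multiset.count_cons_of_ne (by decide),
        hrest, count_erase2_ne MS.Y MS.N MS.sig' (by decide) (by decide)]
      exact hs'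
    have h3 : 0 < (MS.Y ::ₘ MS.Y ::ₘ rest).count MS.Y := by
      rw [Multiset.count_cons_self]; omega
    obtain ⟨c', hr, hg⟩ := ih _ hN' h1 h2 h3
    exact ⟨c', .head hstep hr, hg⟩

/-- Phase 2 (d < 0): eliminate Y's using a σ'. -/
lemma phase2_sig' : ∀ n (c : Multiset MS), c.count MS.Y ≤ n →
    c.count MS.sig = 0 → 0 < c.count MS.sig' →
    ∃ c', Reach c c' ∧ ∀ q ∈ c', q = MS.sig' ∨ q = MS.N := by
  intro n
  induction n with
  | zero =>
    intro c h hs _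
    refine ⟨c, .refl, fun q hq => ?_⟩
    rcases q with _ | _ | _ | _
    · exact absurd hq (Multiset.count_eq_zero.mp hs)
    · exact Or.inl rfl
    · exact absurd hq (Multiset.count_eq_zero.mp (Nat.le_zero.mp h))
    · exact Or.inr rfl
  | succ n ih =>
    intro c h hs hsig'
    by_cases hY : c.count MS.Y = 0
    · refine ⟨c, .refl, fun q hq => ?_⟩
      rcases q with _ | _ | _ | _
      · exact absurd hq (Multiset.count_eq_zero.mp hs)
      · exact Or.inl rfl
      · exact absurd hq (Multiset.count_eq_zero.mp hY)
      · exact Or.inr rfl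
    have ha : MS.sig' ∈ c := Multiset.count_pos.mp hsig'
    have hb : MS.Y ∈ c.erase MS.sig' := by
      rw [Multiset.mem_erase_of_ne (by decide)]
      exact Multiset.count_pos.mp (Nat.pos_of_ne_zero hY)
    have hstep := step_pair ha hb
    set rest := (c.erase MS.sig').erase MS.Y with hrest
    have e1 : ((δM MS.sig' MS.Y).1 ::ₘ (δM MS.sig' MS.Y).2 ::ₘ rest) =
        MS.sig' ::ₘ MS.N ::ₘ rest := rfl
    rw [e1] at hstep
    have hY' : (MS.sig' ::ₘ MS.N ::ₘ rest).count MS.Y ≤ n := by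
      rw [Multiset.count_cons_of_ne (by decide), Multiset.count_cons_of_ne (by decide),
        hrest, count_erase2_snd MS.sig' MS.Y (by decide)]
      omega
    have h1 : (MS.sig' ::ₘ MS.N ::ₘ rest).count MS.sig = 0 := by
      rw [Multiset.count_cons_of_ne (by decide), Multiset.count_cons_of_ne (by decide),
        hrest, count_erase2_ne MS.sig' MS.Y MS.sig (by decide) (by decide)]
      exact hs
    have h2 : 0 < (MS.sig' ::ₘ MS.N ::ₘ rest).count MS.sig' := by
      rw [Multiset.count_cons_self]; omega
    obtain ⟨c', hr, hg⟩ := ih _ hY' h1 h2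
    exact ⟨c', .head hstep hr, hg⟩

lemma fixed_true_pairs : ∀ a b : MS, (a = .sig ∨ a = .Y) → (b = .sig ∨ b = .Y) →
    δM a b = (a, b) := by decide

lemma fixed_false_pairs : ∀ a b : MS, (a = .sig' ∨ a = .N) → (b = .sig' ∨ b = .N) →
    δM a b = (a, b) := by decide

lemma fixed_step {P : MS → Prop} (hδ : ∀ a b, P a → P b → δM a b = (a, b))
    {g c' : Multiset MS} (hg : ∀ q ∈ g, P q) (h : Step δM g c') : c' = g := by
  obtain ⟨a, b, rest, hgg, hc'⟩ := h
  have ha : a ∈ g := by rw [hgg]; exact Multiset.mem_cons_self _ _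
  have hb : b ∈ g := by
    rw [hgg]; exact Multiset.mem_cons_of_mem (Multiset.mem_cons_self _ _)
  rw [hc', hδ a b (hg a ha) (hg b hb), hgg]

lemma io_reach {exec : ℕ → Multiset MS}
    (hfair : IsFair δM exec) {c c' : Multiset MS}
    (hio : ∀ n, ∃ m, n ≤ m ∧ exec m = c) (hr : Reach c c') :
    ∀ n, ∃ m, n ≤ m ∧ exec m = c' := by
  induction hr with
  | refl => exact hio
  | tail _ hs ih => exact hfair _ _ ih hs

/-- The majority protocol computes `[x.σ ≥ x.σ']`: from any input multiset over
`{σ, σ'}` of size ≥ 2, every fair execution eventually has all agents outputting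
`1` iff the input contains at least as many σ's as σ''s. -/
theorem stmt10 (x : Multiset MS) (hin : ∀ q ∈ x, q = MS.sig ∨ q = MS.sig')
    (hcard : 2 ≤ Multiset.card x)
    (exec : ℕ → Multiset MS) (h0 : exec 0 = x)
    (hstep : ∀ n, Step δM (exec n) (exec (n + 1)))
    (hfair : IsFair δM exec) :
    ∃ N, ∀ n, N ≤ n → ∀ q ∈ exec n, ωM q = decide (x.count MS.sig' ≤ x.count MS.sig) := by
  have hnonN0 : ∃ q ∈ x, q ≠ MS.N := by
    have hx : x ≠ 0 := by
      intro h; rw [h] at hcard; simp at hcard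
    obtain ⟨q, hq⟩ := Multiset.exists_mem_of_ne_zero hx
    exact ⟨q, hq, by rcases hin q hq with h | h <;> subst h <;> decide⟩
  have hinv : ∀ n, Multiset.card (exec n) = Multiset.card x ∧
      D (exec n) = D x ∧ ∃ q ∈ exec n, q ≠ MS.N := by
    intro n
    induction n with
    | zero => rw [h0]; exact ⟨rfl, rfl, hnonN0⟩
    | succ n ih =>
      exact ⟨(step_card (hstep n)).trans ih.1, (step_D (hstep n)).trans ih.2.1,
        step_nonN (hstep n) ih.2.2⟩
  obtain ⟨c₀, hio⟩ : ∃ c₀ : Multiset MS, ∀ n, ∃ m, n ≤ m ∧ exec m = c₀ := by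
    let f : ℕ → Sym MS (Multiset.card x) := fun n => ⟨exec n, (hinv n).1⟩
    obtain ⟨y, hy⟩ := Finite.exists_infinite_fiber f
    refine ⟨y.1, fun n => ?_⟩
    have hinf : (f ⁻¹' {y}).Infinite := Set.infinite_coe_iff.mp hy
    by_contra hcon
    push_neg at hcon
    refine hinf (Set.Finite.subset (Set.finite_Iio n) ?_)
    intro m hm
    simp only [Set.mem_preimage, Set.mem_singleton_iff] at hm
    have hme : exec m = y.1 := congrArg Subtype.val hm
    exact Set.mem_Iio.mpr (lt_of_not_ge fun hle => hcon m hle hme)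
  obtain ⟨m₀, _, hm₀⟩ := hio 0
  have hD0 : D c₀ = D x := by rw [← hm₀]; exact (hinv m₀).2.1
  have hnonN : ∃ q ∈ c₀, q ≠ MS.N := hm₀ ▸ (hinv m₀).2.2
  obtain ⟨c₁, hr1, hmin⟩ := phase1 (c₀.count MS.sig') c₀ le_rfl
  have hD1 : D c₁ = D x := (reach_D hr1).trans hD0
  have hnonN1 : ∃ q ∈ c₁, q ≠ MS.N := reach_nonN hr1 hnonN
  have hD1' : (c₁.count MS.sig : ℤ) - c₁.count MS.sig' =
      (x.count MS.sig : ℤ) - x.count MS.sig' := by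
    rw [← D_count, hD1, D_count]
  by_cases hd : x.count MS.sig' ≤ x.count MS.sig
  · have hb : decide (x.count MS.sig' ≤ x.count MS.sig) = true := decide_eq_true hd
    have hs'0 : c₁.count MS.sig' = 0 := by
      rcases hmin with h | h
      · omega
      · exact h
    obtain ⟨g, hr2, hgood⟩ : ∃ g, Reach c₁ g ∧ ∀ q ∈ g, q = MS.sig ∨ q = MS.Y := by
      by_cases hsig : c₁.count MS.sig = 0
      · have hYpos : 0 < c₁.count MS.Y := by
          obtain ⟨q, hq, hqN⟩ := hnonN1
          rcases q with _ | _ | _ | _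
          · exact absurd hq (Multiset.count_eq_zero.mp hsig)
          · exact absurd hq (Multiset.count_eq_zero.mp hs'0)
          · exact Multiset.count_pos.mpr hq
          · exact absurd rfl hqN
        obtain ⟨g, hr, hg⟩ := phase2_Y (c₁.count MS.N) c₁ le_rfl hsig hs'0 hYpos
        exact ⟨g, hr, fun q hq => Or.inr (hg q hq)⟩
      · exact phase2_sig (c₁.count MS.N) c₁ le_rfl hs'0 (Nat.pos_of_ne_zero hsig)
    have hiog := io_reach hfair hio (hr1.trans hr2)
    obtain ⟨n1, _, hn1⟩ := hiog 0
    have hfixn : ∀ n, n1 ≤ n → exec n = g := by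
      intro n hn
      induction n, hn using Nat.le_induction with
      | base => exact hn1
      | succ n hn ih =>
        have hs := hstep n
        rw [ih] at hs
        exact fixed_step fixed_true_pairs hgood hs
    refine ⟨n1, fun n hn q hq => ?_⟩
    rw [hfixn n hn] at hq
    rw [hb]
    rcases hgood q hq with rfl | rfl <;> rfl
  · have hb : decide (x.count MS.sig' ≤ x.count MS.sig) = false := decide_eq_false hd
    have hs0 : c₁.count MS.sig = 0 := by
      rcases hmin with h | h
      · exact h
      · omega
    have hs'pos : 0 < c₁.count MS.sig' := by omega
    obtain ⟨g, hr2, hgood⟩ := phase2_sig' (c₁.count MS.Y) c₁ le_rfl hs0 hs'pos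
    have hiog := io_reach hfair hio (hr1.trans hr2)
    obtain ⟨n1, _, hn1⟩ := hiog 0
    have hfixn : ∀ n, n1 ≤ n → exec n = g := by
      intro n hn
      induction n, hn using Nat.le_induction with
      | base => exact hn1
      | succ n hn ih =>
        have hs := hstep n
        rw [ih] at hs
        exact fixed_step fixed_false_pairs hgood hs
    refine ⟨n1, fun n hn q hq => ?_⟩
    rw [hfixn n hn] at hq
    rw [hb]
    rcases hgood q hq with rfl | rfl <;> rfl
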